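/- Let α > 0, γ_P > 0, γ_I > 0, let Ψ, Ψ_f : ℝ → ℝ^{3×3} be continuous, and let ĩ, θ̃ : ℝ → ℝ³ be differentiable and satisfy ĩ'(t) = −α·ĩ(t) + Ψ(t)·θ̃(t) and θ̃'(t) = −γ_P·Ψ(t)ᵀ·ĩ(t) − γ_I·Ψ_f(t)ᵀ·Ψ_f(t)·θ̃(t). Then the observation error ĩ is square integrable: for every T ≥ 0, α·∫₀^T |ĩ(s)|² ds ≤ (1/2)|ĩ(0)|² + (1/(2γ_P))|θ̃(0)|². -/

import Mathlib

/-!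
The function `V = ½|ĩ|² + (1/(2γ_P))|θ̃|²` is a Lyapunov function for the error dynamics: along
solutions the cross terms `ĩ ⬝ Ψθ̃` and `θ̃ ⬝ Ψᵀĩ` cancel, leaving
`V' = -α|ĩ|² - (γ_I/γ_P)|Ψ_f θ̃|² ≤ -α|ĩ|²`. Integrating over `[0, T]` and dropping `V(T) ≥ 0`
gives `α ∫₀ᵀ |ĩ|² ≤ V(0)`.
-/

open Matrix Set MeasureTheory

theorem intervalIntegral.integral_le_sub_of_hasDerivAt_le_neg {V V' w : ℝ → ℝ} {a b : ℝ}
    (hab : a ≤ b) (hV : ∀ t, HasDerivAt V (V' t) t) (hw : IntegrableOn w (Icc a b))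
    (hV' : ∀ t, V' t ≤ -w t) : ∫ t in a..b, w t ≤ V a - V b := by
  have hnegV : ∀ t, HasDerivAt (fun s => -V s) (-V' t) t := fun t => (hV t).neg
  have h := integral_le_sub_of_hasDeriv_right_of_le hab
    (fun t _ => (hnegV t).continuousAt.continuousWithinAt)
    (fun t _ => (hnegV t).hasDerivWithinAt) hw (fun t _ => le_neg_of_le_neg (hV' t))
  linarith

theorem HasDerivAt.dotProduct {𝕜 ι : Type*} [NontriviallyNormedField 𝕜] [Fintype ι]
    {f g : 𝕜 → ι → 𝕜} {f' g' : ι → 𝕜} {t : 𝕜}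
    (hf : HasDerivAt f f' t) (hg : HasDerivAt g g' t) :
    HasDerivAt (fun s => f s ⬝ᵥ g s) (f' ⬝ᵥ g t + f t ⬝ᵥ g') t := by
  have h := HasDerivAt.fun_sum (u := Finset.univ) fun i _ =>
    (hasDerivAt_pi.1 hf i).mul (hasDerivAt_pi.1 hg i)
  simpa only [_root_.dotProduct, Pi.mul_apply, Finset.sum_add_distrib] using h

theorem dotProduct_self_eq_sum_sq {R ι : Type*} [CommSemiring R] [Fintype ι] (v : ι → R) :
    v ⬝ᵥ v = ∑ i, v i ^ 2 := by
  simp only [dotProduct, sq]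

namespace CompositeIdentifier

variable {m n k : Type*} [Fintype m] [Fintype n] [Fintype k]

noncomputable def lyapunov (γP : ℝ) (i : n → ℝ) (θ : m → ℝ) : ℝ :=
  (1 / 2) * (i ⬝ᵥ i) + (1 / (2 * γP)) * (θ ⬝ᵥ θ)

theorem lyapunov_nonneg {γP : ℝ} (hγP : 0 < γP) (i : n → ℝ) (θ : m → ℝ) :
    0 ≤ lyapunov γP i θ := by
  have hi : 0 ≤ i ⬝ᵥ i := dotProduct_self_star_nonneg i
  have hθ : 0 ≤ θ ⬝ᵥ θ := dotProduct_self_star_nonneg θ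
  unfold lyapunov
  positivity

theorem lyapunov_derivative_eq {α γP γI : ℝ} (hγP : γP ≠ 0) (Ψ : Matrix n m ℝ)
    (Ψf : Matrix k m ℝ) (i : n → ℝ) (θ : m → ℝ) :
    (1 / 2) * ((-α • i + Ψ *ᵥ θ) ⬝ᵥ i + i ⬝ᵥ (-α • i + Ψ *ᵥ θ))
      + (1 / (2 * γP)) * ((-γP • (Ψᵀ *ᵥ i) - γI • (Ψfᵀ *ᵥ (Ψf *ᵥ θ))) ⬝ᵥ θ
        + θ ⬝ᵥ (-γP • (Ψᵀ *ᵥ i) - γI • (Ψfᵀ *ᵥ (Ψf *ᵥ θ))))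
      = -α * (i ⬝ᵥ i) - γI / γP * ((Ψf *ᵥ θ) ⬝ᵥ (Ψf *ᵥ θ)) := by
  simp only [dotProduct_comm _ i, dotProduct_comm _ θ, dotProduct_add, dotProduct_sub,
    dotProduct_smul, dotProduct_transpose_mulVec, smul_eq_mul]
  field_simp
  ring

theorem hasDerivAt_lyapunov {α γP γI : ℝ} (hγP : γP ≠ 0) {Ψ : ℝ → Matrix n m ℝ}
    {Ψf : ℝ → Matrix k m ℝ} {i : ℝ → n → ℝ} {θ : ℝ → m → ℝ} {t : ℝ}
    (hi : HasDerivAt i (-α • i t + Ψ t *ᵥ θ t) t)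
    (hθ : HasDerivAt θ (-γP • ((Ψ t)ᵀ *ᵥ i t) - γI • ((Ψf t)ᵀ *ᵥ (Ψf t *ᵥ θ t))) t) :
    HasDerivAt (fun s => lyapunov γP (i s) (θ s))
      (-α * (i t ⬝ᵥ i t) - γI / γP * ((Ψf t *ᵥ θ t) ⬝ᵥ (Ψf t *ᵥ θ t))) t := by
  rw [← lyapunov_derivative_eq hγP]
  exact ((hi.dotProduct hi).const_mul _).add ((hθ.dotProduct hθ).const_mul _)

end CompositeIdentifier

open CompositeIdentifier in
theorem composite_identifier_error_square_integrable
    (α γP γI : ℝ) (hγP : 0 < γP) (hγI : 0 < γI)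
    (Ψ Ψf : ℝ → Matrix (Fin 3) (Fin 3) ℝ)
    (itil θtil : ℝ → Fin 3 → ℝ)
    (hitil : ∀ t : ℝ, HasDerivAt itil (-α • itil t + Ψ t *ᵥ θtil t) t)
    (hθtil : ∀ t : ℝ, HasDerivAt θtil
      (-γP • ((Ψ t)ᵀ *ᵥ itil t) - γI • ((Ψf t)ᵀ *ᵥ (Ψf t *ᵥ θtil t))) t) :
    ∀ T : ℝ, 0 ≤ T →
      α * ∫ s in (0:ℝ)..T, ∑ j : Fin 3, itil s j ^ 2
        ≤ (1 / 2) * ∑ j : Fin 3, itil 0 j ^ 2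
          + (1 / (2 * γP)) * ∑ j : Fin 3, θtil 0 j ^ 2 := by
  intro T hT
  simp only [← dotProduct_self_eq_sum_sq]
  have hitil_cont : Continuous itil :=
    continuous_iff_continuousAt.2 fun t => (hitil t).continuousAt
  have hdissipation : ∀ t, -α * (itil t ⬝ᵥ itil t)
      - γI / γP * ((Ψf t *ᵥ θtil t) ⬝ᵥ (Ψf t *ᵥ θtil t)) ≤ -(α * (itil t ⬝ᵥ itil t)) := by
    intro t
    have hΨfθ : 0 ≤ (Ψf t *ᵥ θtil t) ⬝ᵥ (Ψf t *ᵥ θtil t) := dotProduct_self_star_nonneg _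
    have := mul_nonneg (div_pos hγI hγP).le hΨfθ
    linarith
  have hsq_cont : Continuous fun s => α * (itil s ⬝ᵥ itil s) :=
    continuous_const.mul (hitil_cont.dotProduct hitil_cont)
  have hV := intervalIntegral.integral_le_sub_of_hasDerivAt_le_neg hT
    (fun t => hasDerivAt_lyapunov hγP.ne' (hitil t) (hθtil t)) hsq_cont.integrableOn_Icc
    hdissipation
  rw [intervalIntegral.integral_const_mul] at hV
  have hVT := lyapunov_nonneg hγP (itil T) (θtil T)
  unfold lyapunov at hV hVT
  linarith
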